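/- arXiv:1802.08892 — 2 statements merged into one kernel-verified Lean document; each statement's English description precedes it below -/
import Mathlib

section
/- Let V be a vector space over a field 𝔽, n ≥ 2, f an n-linear map on V, and ℬ a basis of V. Then V decomposes as the f-orthogonal direct sum V = ⊕_{[e_i] ∈ ℬ/∼} V_{[e_i]} of the linear subspaces V_{[e_i]}; that is, V is the (internal) direct sum of the subspaces V_{[e_i]} and distinct summands are pairwise f-orthogonal. -/
/- Common setting: `V` is a vector space over a field `𝔽`, and `f` is an
`n`-linear map on `V` where `n = m + 1 ≥ 2` (i.e. `1 ≤ m`).  Tuples of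
length `n - 1 = m` index the last arguments of the set-valued map `F`. -/

open scoped Classical

noncomputable section

variable {𝔽 V I : Type*}

/-- The set `V* = V \ {0}` of nonzero vectors. -/
abbrev Vstar (V : Type*) [Zero V] := {v : V // v ≠ 0}

/-- The disjoint union `ℬ ∪̇ ℬ̄`, encoded by indices: `(false, i)` stands for the
basis vector `e i ∈ ℬ` and `(true, i)` for the formal bar symbol `ē i ∈ ℬ̄`. -/
abbrev BSym (I : Type*) := Bool × I

/-- The bar-swap on `ℬ ∪̇ ℬ̄`. -/
def barSwap {I : Type*} (s : BSym I) : BSym I := (!s.1, s.2)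

variable [Field 𝔽] [AddCommGroup V] [Module 𝔽 V] {m : ℕ}

/-- A basis vector, as an element of `V*`. -/
def bstar (b : Module.Basis I 𝔽 V) (i : I) : Vstar V := ⟨b i, b.ne_zero i⟩

/-- The set-valued map `F : 𝒫(V*) × (ℬ ∪̇ ℬ̄)^{n-1} → 𝒫(V*)` associated to the
`n`-linear map `f` and the basis `b` (here `n = m + 1`). -/
def Fmap (b : Module.Basis I 𝔽 V) (f : MultilinearMap 𝔽 (fun _ : Fin (m + 1) => V) V)
    (U : Set (Vstar V)) (ξ : Fin m → BSym I) : Set (Vstar V) :=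
  if ∀ t, (ξ t).1 = false then
    {w | ∃ (k : Fin (m + 1)) (σ : Equiv.Perm (Fin m)), ∃ u ∈ U,
      f (Fin.insertNth k u.1 fun t => b (ξ (σ t)).2) = w.1}
  else if ∀ t, (ξ t).1 = true then
    {w | ∃ (k : Fin (m + 1)) (σ : Equiv.Perm (Fin m)), ∃ u ∈ U,
      f (Fin.insertNth k w.1 fun t => b (ξ (σ t)).2) = u.1}
  else ∅

/-- Iterated application of `F` along a list of `(n-1)`-tuples. -/
def iterF (b : Module.Basis I 𝔽 V) (f : MultilinearMap 𝔽 (fun _ : Fin (m + 1) => V) V) :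
    Set (Vstar V) → List (Fin m → BSym I) → Set (Vstar V)
  | U, [] => U
  | U, X :: Xs => iterF b f (Fmap b f U X) Xs

/-- `X` is a connection from `e i` to `e j`.  (Since `F(∅,⋯) = ∅`, the requirement
that all intermediate iterated images are nonempty is equivalent to the final
image containing `e j`.) -/
def IsConnection (b : Module.Basis I 𝔽 V) (f : MultilinearMap 𝔽 (fun _ : Fin (m + 1) => V) V)
    (i j : I) (X : List (Fin m → BSym I)) : Prop :=
  X ≠ [] ∧ bstar b j ∈ iterF b f {bstar b i} X

/-- `e i` is connected to `e j`. -/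
def Connected (b : Module.Basis I 𝔽 V) (f : MultilinearMap 𝔽 (fun _ : Fin (m + 1) => V) V)
    (i j : I) : Prop :=
  i = j ∨ ∃ X : List (Fin m → BSym I), IsConnection b f i j X

/-- Two subspaces `W₁, W₂` are `f`-orthogonal. -/
def FOrthogonal (f : MultilinearMap 𝔽 (fun _ : Fin (m + 1) => V) V)
    (W₁ W₂ : Submodule 𝔽 V) : Prop :=
  ∀ k₁ k₂ : Fin (m + 1), k₁ ≠ k₂ →
    ∀ v : Fin (m + 1) → V, v k₁ ∈ W₁ → v k₂ ∈ W₂ → f v = 0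

/-- A subspace `W` is strongly `f`-invariant: `f(V,…,W,…,V) ⊆ W` for every slot. -/
def StronglyInvariant (f : MultilinearMap 𝔽 (fun _ : Fin (m + 1) => V) V)
    (W : Submodule 𝔽 V) : Prop :=
  ∀ (k : Fin (m + 1)) (v : Fin (m + 1) → V), v k ∈ W → f v ∈ W

/-- `V_{[e i]}`, the span of the connection class of `e i`. -/
def classSpan (b : Module.Basis I 𝔽 V) (f : MultilinearMap 𝔽 (fun _ : Fin (m + 1) => V) V)
    (i : I) : Submodule 𝔽 V :=
  Submodule.span 𝔽 (⇑b '' {j | Connected b f i j})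

/-- The projection `Π_{V_{[e c]}} : V → V_{[e c]}` relative to the decomposition
`V = ⊕ V_{[e i]}` (expressed through basis coordinates). -/
def projClass (b : Module.Basis I 𝔽 V) (f : MultilinearMap 𝔽 (fun _ : Fin (m + 1) => V) V)
    (c : I) : V →ₗ[𝔽] V :=
  b.constr 𝔽 fun j => if Connected b f c j then b j else 0

/-- One step of the relation `≈`: the sum over `k₁ < k₂` of
`Π_{V_{[c]}}(f(V,…,V_{[d]},…,V_{[d]},…,V)) + Π_{V_{[d]}}(f(V,…,V_{[c]},…,V_{[c]},…,V))`
is nonzero. -/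
def ApproxStep (b : Module.Basis I 𝔽 V) (f : MultilinearMap 𝔽 (fun _ : Fin (m + 1) => V) V)
    (c d : I) : Prop :=
  ∃ k₁ k₂ : Fin (m + 1), k₁ < k₂ ∧
    ((∃ v : Fin (m + 1) → V, v k₁ ∈ classSpan b f d ∧ v k₂ ∈ classSpan b f d ∧
        projClass b f c (f v) ≠ 0) ∨
     (∃ v : Fin (m + 1) → V, v k₁ ∈ classSpan b f c ∧ v k₂ ∈ classSpan b f c ∧
        projClass b f d (f v) ≠ 0))

/-- `V_{[e i]} ≈ V_{[e j]}`: either they coincide (same connection class) or they are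
linked by a finite chain of classes with nonvanishing projection sums. -/
def Approx (b : Module.Basis I 𝔽 V) (f : MultilinearMap 𝔽 (fun _ : Fin (m + 1) => V) V)
    (i j : I) : Prop :=
  Relation.ReflTransGen (fun c d => Connected b f c d ∨ ApproxStep b f c d) i j

/-- `⌢V_{[e i]} = ⊕_{V_{[e j]} ∈ [V_{[e i]}]} V_{[e j]}`. -/
def hatSpan (b : Module.Basis I 𝔽 V) (f : MultilinearMap 𝔽 (fun _ : Fin (m + 1) => V) V)
    (i : I) : Submodule 𝔽 V :=
  Submodule.span 𝔽 (⇑b '' {j | Approx b f i j})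

/-- Two decompositions of `V` as `f`-orthogonal direct sums of strongly `f`-invariant
subspaces (given as the sets of their summands) are isomorphic: there is a linear
automorphism `h` of `V` commuting with `f` carrying the summands of the first
bijectively onto the summands of the second. -/
def IsoDecomp (f : MultilinearMap 𝔽 (fun _ : Fin (m + 1) => V) V)
    (S T : Set (Submodule 𝔽 V)) : Prop :=
  ∃ h : V ≃ₗ[𝔽] V,
    (∀ v : Fin (m + 1) → V, f (fun k => h (v k)) = h (f v)) ∧
    (Submodule.map (h : V →ₗ[𝔽] V)) '' S = T

/-- `X` is a strongly `f'`-invariant subspace of `W`, where `f'` is the restriction of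
`f` to `W`: `f(W,…,X,…,W) ⊆ X` for every slot. -/
def SInvIn (f : MultilinearMap 𝔽 (fun _ : Fin (m + 1) => V) V)
    (W X : Submodule 𝔽 V) : Prop :=
  ∀ (k : Fin (m + 1)) (v : Fin (m + 1) → V), (∀ t, v t ∈ W) → v k ∈ X → f v ∈ X

/-- `W` is `f'`-simple, `f'` being the restriction of `f` to `W`: the restricted map is
nonzero and the only strongly `f'`-invariant subspaces of `W` are `0` and `W`. -/
def SimpleIn (f : MultilinearMap 𝔽 (fun _ : Fin (m + 1) => V) V)
    (W : Submodule 𝔽 V) : Prop :=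
  (∃ v : Fin (m + 1) → V, (∀ t, v t ∈ W) ∧ f v ≠ 0) ∧
  ∀ X : Submodule 𝔽 V, X ≤ W → SInvIn f W X → X = ⊥ ∨ X = W

/-- The annihilator of the restriction `f'` of `f` to `W`. -/
def annIn (f : MultilinearMap 𝔽 (fun _ : Fin (m + 1) => V) V)
    (W : Submodule 𝔽 V) : Set V :=
  {w | w ∈ W ∧ ∀ (k : Fin (m + 1)) (v : Fin (m + 1) → V),
    (∀ t, v t ∈ W) → v k = w → f v = 0}

/-- `𝓘(w)`: the smallest strongly `f'`-invariant subspace of `W` containing `w`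
(equivalently, the ideal of `(W, f')` generated by `w`). -/
def idealGenIn (f : MultilinearMap 𝔽 (fun _ : Fin (m + 1) => V) V)
    (W : Submodule 𝔽 V) (w : V) : Submodule 𝔽 V :=
  sInf {X : Submodule 𝔽 V | X ≤ W ∧ SInvIn f W X ∧ w ∈ X}

/-- `S` is an `i`-division basis of `W` with respect to the restriction `f'` of `f`:
whenever `c ∈ S`, `b₁, …, b_{n-1} ∈ W` and `f'(b₁,…,c,…,b_{n-1}) = w ≠ 0` with `c` in
some slot `k`, then `c, b₁, …, b_{n-1} ∈ 𝓘(w)`. -/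
def IDivisionBasisIn (f : MultilinearMap 𝔽 (fun _ : Fin (m + 1) => V) V)
    (W : Submodule 𝔽 V) (S : Set V) : Prop :=
  ∀ c ∈ S, ∀ (k : Fin (m + 1)) (v : Fin (m + 1) → V),
    (∀ t, v t ∈ W) → v k = c → f v ≠ 0 → ∀ t, v t ∈ idealGenIn f W (f v)

/-! Connectedness is an equivalence relation on the basis: reflexive by definition, transitive
by concatenating lists of tuples, and symmetric because reversing a list and swapping the bars in
each tuple inverts every `F`-step (this needs `n ≥ 2`, so that no tuple is at once barred and
unbarred). The spans of the classes of a partition of a basis are independent and span `V`. If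
`f (e_{r₁}, …, e_{rₙ}) ≠ 0`, then an unbarred step from `e_{r_k}` to this value followed by a barred
step back to `e_{r_l}` connects any two of the `e_{r_k}`; expanding `f` multilinearly in the basis
then shows that distinct classes are `f`-orthogonal. -/

theorem Equivalence.setOf_eq_of_rel {α : Type*} {r : α → α → Prop} (hr : Equivalence r)
    {a a' : α} (h : r a a') : {x | r a x} = {x | r a' x} :=
  Set.ext fun _ => ⟨hr.trans (hr.symm h), hr.trans h⟩

namespace Module.Basis

variable {ι R M : Type*} [Ring R] [AddCommGroup M] [Module R M] (b : Basis ι R M)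

theorem iSupIndep_span_image_setOf {r : ι → ι → Prop} (hr : Equivalence r) :
    iSupIndep fun W : {W : Submodule R M // ∃ i, W = Submodule.span R (b '' {j | r i j})} =>
      W.1 := by
  rintro ⟨_, c, rfl⟩
  refine b.linearIndependent.disjoint_span_image (t := {j | ¬ r c j})
    (Set.disjoint_left.mpr fun _ h h' => h' h) |>.mono_right ?_
  refine iSup₂_le ?_
  rintro ⟨_, d, rfl⟩ hne
  refine Submodule.span_mono (Set.image_mono fun j hdj hcj => hne ?_)
  exact Subtype.ext (congrArg (fun s => Submodule.span R (b '' s))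
    (hr.setOf_eq_of_rel (hr.trans hcj (hr.symm hdj))).symm)

theorem iSup_span_image_setOf_eq_top {r : ι → ι → Prop} (hr : ∀ i, r i i) :
    (⨆ W : {W : Submodule R M // ∃ i, W = Submodule.span R (b '' {j | r i j})}, W.1) = ⊤ := by
  rw [eq_top_iff, ← b.span_eq, Submodule.span_le]
  rintro _ ⟨i, rfl⟩
  exact Submodule.mem_iSup_of_mem ⟨_, i, rfl⟩ (Submodule.subset_span ⟨i, hr i, rfl⟩)

end Module.Basis

theorem MultilinearMap.map_eq_zero_of_mem_span_basis {ι R M N J : Type*} [CommSemiring R]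
    [AddCommMonoid M] [Module R M] [AddCommMonoid N] [Module R N] [Fintype ι] [DecidableEq ι]
    (b : Module.Basis J R M) (f : MultilinearMap R (fun _ : ι => M) N) {k₁ k₂ : ι}
    {S T : Set J} (hf : ∀ r : ι → J, r k₁ ∈ S → r k₂ ∈ T → f (b ∘ r) = 0)
    {v : ι → M} (h₁ : v k₁ ∈ Submodule.span R (b '' S))
    (h₂ : v k₂ ∈ Submodule.span R (b '' T)) : f v = 0 := by
  have hv : v = fun t => ∑ j ∈ (b.repr (v t)).support, b.repr (v t) j • b j :=
    funext fun t => (b.linearCombination_repr (v t)).symm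
  rw [hv, f.map_sum_finset]
  refine Finset.sum_eq_zero fun r hr => ?_
  rw [Fintype.mem_piFinset] at hr
  rw [f.map_smul_univ (fun t => b.repr (v t) (r t)) (fun t => b (r t))]
  exact smul_eq_zero_of_right _
    (hf r (b.mem_span_image.mp h₁ (hr k₁)) (b.mem_span_image.mp h₂ (hr k₂)))

section Connected

variable (b : Module.Basis I 𝔽 V) (f : MultilinearMap 𝔽 (fun _ : Fin (m + 1) => V) V)

theorem Fmap_mono {U U' : Set (Vstar V)} (h : U ⊆ U') (ξ : Fin m → BSym I) :
    Fmap b f U ξ ⊆ Fmap b f U' ξ := by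
  unfold Fmap
  split_ifs
  all_goals first
    | exact Set.Subset.rfl
    | exact fun _ ⟨k, σ, u, hu, he⟩ => ⟨k, σ, u, h hu, he⟩

theorem iterF_mono {U U' : Set (Vstar V)} (h : U ⊆ U') (X : List (Fin m → BSym I)) :
    iterF b f U X ⊆ iterF b f U' X := by
  induction X generalizing U U' with
  | nil => exact h
  | cons ξ X ih => exact ih (Fmap_mono b f h ξ)

theorem iterF_append (U : Set (Vstar V)) (X Y : List (Fin m → BSym I)) :
    iterF b f U (X ++ Y) = iterF b f (iterF b f U X) Y := by
  induction X generalizing U with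
  | nil => rfl
  | cons ξ X ih => exact ih _

theorem exists_mem_Fmap_barSwap_of_mem_Fmap (hm : 1 ≤ m) {U : Set (Vstar V)}
    {ξ : Fin m → BSym I} {w : Vstar V} (hw : w ∈ Fmap b f U ξ) :
    ∃ u ∈ U, u ∈ Fmap b f {w} (barSwap ∘ ξ) := by
  unfold Fmap at hw ⊢
  simp only [Function.comp_apply, barSwap, Bool.not_eq_false', Bool.not_eq_true'] at hw ⊢
  split_ifs at hw ⊢ with h₁ h₂ h₂
  · exact absurd (h₁ ⟨0, hm⟩) (by simp [h₂ ⟨0, hm⟩])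
  · obtain ⟨k, σ, u, hu, he⟩ := hw
    exact ⟨u, hu, k, σ, w, rfl, he⟩
  · obtain ⟨k, σ, u, hu, he⟩ := hw
    exact ⟨u, hu, k, σ, w, rfl, he⟩
  · exact hw.elim

theorem exists_mem_iterF_reverse_of_mem_iterF (hm : 1 ≤ m) {U : Set (Vstar V)}
    {X : List (Fin m → BSym I)} {w : Vstar V} (hw : w ∈ iterF b f U X) :
    ∃ u ∈ U, u ∈ iterF b f {w} (X.reverse.map (barSwap ∘ ·)) := by
  induction X generalizing U with
  | nil => exact ⟨w, hw, rfl⟩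
  | cons ξ X ih =>
    obtain ⟨u', hu', hwu'⟩ := ih hw
    obtain ⟨u, hu, hu'u⟩ := exists_mem_Fmap_barSwap_of_mem_Fmap b f hm hu'
    refine ⟨u, hu, ?_⟩
    rw [List.reverse_cons, List.map_append, iterF_append]
    exact Fmap_mono b f (Set.singleton_subset_iff.mpr hwu') _ hu'u

theorem connected_symm (hm : 1 ≤ m) {i j : I} (h : Connected b f i j) : Connected b f j i := by
  obtain rfl | ⟨X, hX, hij⟩ := h
  · exact Or.inl rfl
  obtain ⟨_, rfl, hji⟩ := exists_mem_iterF_reverse_of_mem_iterF b f hm hij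
  exact Or.inr ⟨_, by simpa using hX, hji⟩

theorem connected_trans {i j k : I} (hij : Connected b f i j) (hjk : Connected b f j k) :
    Connected b f i k := by
  obtain rfl | ⟨X, hX, hij⟩ := hij
  · exact hjk
  obtain rfl | ⟨Y, -, hjk⟩ := hjk
  · exact Or.inr ⟨X, hX, hij⟩
  refine Or.inr ⟨X ++ Y, by simp [hX], ?_⟩
  rw [iterF_append]
  exact iterF_mono b f (Set.singleton_subset_iff.mpr hij) Y hjk

theorem connected_equivalence (hm : 1 ≤ m) : Equivalence (Connected b f) :=
  ⟨fun _ => Or.inl rfl, connected_symm b f hm, connected_trans b f⟩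

theorem connected_of_map_basis_ne_zero (hm : 1 ≤ m) {r : Fin (m + 1) → I}
    (hr : f (b ∘ r) ≠ 0) (k₁ k₂ : Fin (m + 1)) : Connected b f (r k₁) (r k₂) := by
  let w : Vstar V := ⟨f (b ∘ r), hr⟩
  have hinsert (k : Fin (m + 1)) :
      f (Fin.insertNth k (b (r k)) fun t => b (r (k.succAbove ((1 : Equiv.Perm (Fin m)) t)))) =
        w.1 :=
    congrArg f (Fin.insertNth_self_removeNth k (b ∘ r))
  have hforward : w ∈ Fmap b f {bstar b (r k₁)} fun t => (false, r (k₁.succAbove t)) := by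
    rw [Fmap, if_pos fun _ => rfl]
    exact ⟨k₁, 1, _, rfl, hinsert k₁⟩
  have hback : bstar b (r k₂) ∈ Fmap b f {w} fun t => (true, r (k₂.succAbove t)) := by
    rw [Fmap, if_neg fun h => Bool.noConfusion (h ⟨0, hm⟩), if_pos fun _ => rfl]
    exact ⟨k₂, 1, _, rfl, hinsert k₂⟩
  exact Or.inr ⟨[_, _], List.cons_ne_nil _ _,
    Fmap_mono b f (Set.singleton_subset_iff.mpr hforward) _ hback⟩

theorem fOrthogonal_classSpan_of_not_connected (hm : 1 ≤ m) {c d : I}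
    (hcd : ¬ Connected b f c d) : FOrthogonal f (classSpan b f c) (classSpan b f d) :=
  fun k₁ k₂ _ _ h₁ h₂ => f.map_eq_zero_of_mem_span_basis b (fun r hc hd => by
    by_contra hr
    exact hcd (connected_trans b f hc (connected_trans b f
      (connected_of_map_basis_ne_zero b f hm hr k₁ k₂) (connected_symm b f hm hd)))) h₁ h₂

end Connected

/-- `V` is the `f`-orthogonal internal direct sum of the `V_{[e i]}`. -/
theorem stmt6 (hm : 1 ≤ m) (b : Module.Basis I 𝔽 V)
    (f : MultilinearMap 𝔽 (fun _ : Fin (m + 1) => V) V) :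
    iSupIndep (fun W : {W : Submodule 𝔽 V // ∃ i, W = classSpan b f i} => W.1) ∧
    (⨆ W : {W : Submodule 𝔽 V // ∃ i, W = classSpan b f i}, W.1) = ⊤ ∧
    (∀ W₁ W₂ : {W : Submodule 𝔽 V // ∃ i, W = classSpan b f i},
      W₁ ≠ W₂ → FOrthogonal f W₁.1 W₂.1) := by
  have hequiv := connected_equivalence b f hm
  refine ⟨b.iSupIndep_span_image_setOf hequiv, b.iSup_span_image_setOf_eq_top hequiv.refl, ?_⟩
  rintro ⟨_, c, rfl⟩ ⟨_, d, rfl⟩ hne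
  exact fOrthogonal_classSpan_of_not_connected b f hm fun hcd => hne <| Subtype.ext <|
    congrArg (fun s => Submodule.span 𝔽 (b '' s)) (hequiv.setOf_eq_of_rel hcd)
end
end

section
/- Let V be a vector space over a field 𝔽, n ≥ 2, f an n-linear map on V, and fix two bases ℬ = {e_i : i ∈ I} and ℬ′ = {u_i : i ∈ I} of V. Suppose there exists a bijection μ : I → I such that the linear isomorphism g : V → V determined by g(e_i) := u_{μ(i)} for all i ∈ I satisfies f(g(v₁),…, u_{μ(i)} in slot k₁, …, u_{μ(j)} in slot k₂, …, g(v_{n-2})) = g(f(v₁,…, e_i in slot k₁, …, e_j in slot k₂, …, v_{n-2})) for all i, j ∈ I, all k₁, k₂ ∈ {1,…,n} with k₁ < k₂, and all v₁,…,v_{n-2} ∈ V. Then the decompositions Γ : V = ⊕_{[V_{[e_i]}] ∈ ℱ/≈} ⌢V_{[e_i]} and Γ′ : V = ⊕_{[V_{[u_i]}] ∈ ℱ′/≈} ⌢V_{[u_i]}, obtained by applying the decomposition theorem to ℬ and ℬ′ respectively, are isomorphic. -/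
/- Common setting: `V` is a vector space over a field `𝔽`, and `f` is an
`n`-linear map on `V` where `n = m + 1 ≥ 2` (i.e. `1 ≤ m`).  Tuples of
length `n - 1 = m` index the last arguments of the set-valued map `F`. -/

open scoped Classical

noncomputable section

variable {𝔽 V I : Type*}

variable [Field 𝔽] [AddCommGroup V] [Module 𝔽 V] {m : ℕ}

/-! The hypothesis is the case of `f (g v₁, …, g vₙ) = g (f (v₁, …, vₙ))` in which two
fixed slots hold basis vectors; since both sides are multilinear, it holds for all arguments,
so `g = b.equiv b' μ` is an automorphism of `(V, f)` sending `e i` to `u (μ i)`. Every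
ingredient of the decomposition theorem (the map `F`, connections, the spans `V_{[e i]}`, their
projections, the relation `≈` and the spans `⌢V_{[e i]}`) is built from `f` and the basis
alone, so `g` transports each of them: `g (⌢V_{[e i]}) = ⌢V_{[u (μ i)]}`, and `μ` matches the
summands. -/

open Function

lemma Fin.comp_insertNth {n : ℕ} {α β : Type*} (g : α → β) (k : Fin (n + 1)) (x : α)
    (p : Fin n → α) : g ∘ Fin.insertNth k x p = Fin.insertNth k (g x) (g ∘ p) := by
  ext t
  induction t using Fin.succAboveCases k <;> simp

section Multilinear

variable {R ι κ M N : Type*} [CommSemiring R] [AddCommMonoid M] [AddCommMonoid N]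
  [Module R M] [Module R N] [DecidableEq ι]

lemma MultilinearMap.apply_update_eq_of_basis {F G : MultilinearMap R (fun _ : ι => M) N}
    (b : Module.Basis κ R M) {k : ι} {v : ι → M}
    (h : ∀ i, F (update v k (b i)) = G (update v k (b i))) (x : M) :
    F (update v k x) = G (update v k x) :=
  LinearMap.congr_fun (b.ext (f₁ := F.toLinearMap v k) (f₂ := G.toLinearMap v k) h) x

lemma MultilinearMap.ext_update_update_basis {F G : MultilinearMap R (fun _ : ι => M) N}
    (b : Module.Basis κ R M) (k₁ k₂ : ι)
    (h : ∀ i j v, F (update (update v k₁ (b i)) k₂ (b j)) =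
      G (update (update v k₁ (b i)) k₂ (b j))) : F = G := by
  have h₁ : ∀ i v, F (update v k₁ (b i)) = G (update v k₁ (b i)) := fun i v => by
    simpa using apply_update_eq_of_basis b (h i · (update v k₁ (b i))) (update v k₁ (b i) k₂)
  ext v
  simpa using apply_update_eq_of_basis b (h₁ · v) (v k₁)

end Multilinear

def CommutesWith (f : MultilinearMap 𝔽 (fun _ : Fin (m + 1) => V) V) (g : V ≃ₗ[𝔽] V) : Prop :=
  ∀ v : Fin (m + 1) → V, f (fun k => g (v k)) = g (f v)

namespace CommutesWith

variable {f : MultilinearMap 𝔽 (fun _ : Fin (m + 1) => V) V} {g : V ≃ₗ[𝔽] V}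

lemma of_update_update_basis (b : Module.Basis I 𝔽 V) (k₁ k₂ : Fin (m + 1))
    (h : ∀ i j v, f (update (update (fun t => g (v t)) k₁ (g (b i))) k₂ (g (b j))) =
      g (f (update (update v k₁ (b i)) k₂ (b j)))) :
    CommutesWith f g := fun v =>
  congrArg (· v) <| MultilinearMap.ext_update_update_basis
    (F := f.compLinearMap fun _ => (g : V →ₗ[𝔽] V))
    (G := (g : V →ₗ[𝔽] V).compMultilinearMap f) b k₁ k₂
    fun i j v => by simpa [apply_update (fun _ => g)] using h i j v

lemma symm (hg : CommutesWith f g) : CommutesWith f g.symm := fun v =>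
  g.injective <| by simpa using (hg fun k => g.symm (v k)).symm

lemma map_insertNth (hg : CommutesWith f g) (k : Fin (m + 1)) (x : V) (p : Fin m → V) :
    f (Fin.insertNth k (g x) (g ∘ p)) = g (f (Fin.insertNth k x p)) := by
  rw [← Fin.comp_insertNth]
  exact hg _

end CommutesWith

def vstarEquiv (g : V ≃ₗ[𝔽] V) : Vstar V ≃ Vstar V :=
  g.toEquiv.subtypeEquiv fun _ => g.map_ne_zero_iff.symm

section Transport

variable {b b' : Module.Basis I 𝔽 V} {f : MultilinearMap 𝔽 (fun _ : Fin (m + 1) => V) V}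
  {μ : I ≃ I}

lemma Fmap_equiv (hf : CommutesWith f (b.equiv b' μ)) (U : Set (Vstar V))
    (ξ : Fin m → BSym I) :
    Fmap b' f (vstarEquiv (b.equiv b' μ) '' U) (Prod.map id μ ∘ ξ) =
      vstarEquiv (b.equiv b' μ) '' Fmap b f U ξ := by
  have hmap : ∀ k (σ : Equiv.Perm (Fin m)) x,
      f (Fin.insertNth k (b.equiv b' μ x) fun t => b' (μ (ξ (σ t)).2)) =
        b.equiv b' μ (f (Fin.insertNth k x fun t => b (ξ (σ t)).2)) := fun k σ x => by
    simpa [comp_def] using hf.map_insertNth k x fun t => b (ξ (σ t)).2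
  ext w
  obtain ⟨w, rfl⟩ := (vstarEquiv (b.equiv b' μ)).surjective w
  rw [(vstarEquiv _).injective.mem_set_image]
  simp only [Fmap, comp_apply, Prod.map_fst, Prod.map_snd, id]
  split_ifs <;> simp only [Set.mem_ofPred_eq, Set.exists_mem_image, vstarEquiv,
    Equiv.subtypeEquiv_apply, LinearEquiv.coe_toEquiv, hmap, (b.equiv b' μ).injective.eq_iff,
    Set.mem_empty_iff_false]

lemma iterF_equiv (hf : CommutesWith f (b.equiv b' μ)) (U : Set (Vstar V))
    (X : List (Fin m → BSym I)) :
    iterF b' f (vstarEquiv (b.equiv b' μ) '' U) (X.map (Prod.map id μ ∘ ·)) =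
      vstarEquiv (b.equiv b' μ) '' iterF b f U X := by
  induction X generalizing U with
  | nil => rfl
  | cons ξ X ih => simp only [List.map_cons, iterF, Fmap_equiv hf, ih]

lemma vstarEquiv_bstar (i : I) : vstarEquiv (b.equiv b' μ) (bstar b i) = bstar b' (μ i) :=
  Subtype.ext (b.equiv_apply i b' μ)

lemma Connected.equiv (hf : CommutesWith f (b.equiv b' μ)) {i j : I} (h : Connected b f i j) :
    Connected b' f (μ i) (μ j) := by
  obtain rfl | ⟨X, hX, hj⟩ := h
  · exact Or.inl rfl
  refine Or.inr ⟨X.map (Prod.map id μ ∘ ·), by simpa using hX, ?_⟩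
  rw [← vstarEquiv_bstar, ← vstarEquiv_bstar, ← Set.image_singleton, iterF_equiv hf]
  exact Set.mem_image_of_mem _ hj

lemma CommutesWith.basis_equiv_symm (hf : CommutesWith f (b.equiv b' μ)) :
    CommutesWith f (b'.equiv b μ.symm) :=
  b.equiv_symm b' μ ▸ hf.symm

lemma connected_equiv_iff (hf : CommutesWith f (b.equiv b' μ)) (i j : I) :
    Connected b' f (μ i) (μ j) ↔ Connected b f i j :=
  ⟨fun h => by simpa using h.equiv hf.basis_equiv_symm, (·.equiv hf)⟩

lemma Module.Basis.map_equiv_span_image (s : Set I) :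
    (Submodule.span 𝔽 (b '' s)).map (b.equiv b' μ : V →ₗ[𝔽] V) =
      Submodule.span 𝔽 (b' '' (μ '' s)) := by
  rw [Submodule.map_span, ← Set.image_comp, ← Set.image_comp]
  exact congrArg _ (Set.image_congr fun i _ => b.equiv_apply i b' μ)

lemma Module.Basis.map_equiv_span_setOf {R R' : I → I → Prop}
    (h : ∀ i j, R' (μ i) (μ j) ↔ R i j) (i : I) :
    (Submodule.span 𝔽 (b '' {j | R i j})).map (b.equiv b' μ : V →ₗ[𝔽] V) =
      Submodule.span 𝔽 (b' '' {j | R' (μ i) j}) := by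
  rw [b.map_equiv_span_image, μ.image_eq_preimage_symm]
  congr 2
  ext j
  simpa using (h i (μ.symm j)).symm

lemma classSpan_equiv (hf : CommutesWith f (b.equiv b' μ)) (i : I) :
    (classSpan b f i).map (b.equiv b' μ : V →ₗ[𝔽] V) = classSpan b' f (μ i) :=
  b.map_equiv_span_setOf (connected_equiv_iff hf) i

lemma projClass_equiv (hf : CommutesWith f (b.equiv b' μ)) (c : I) (x : V) :
    b.equiv b' μ (projClass b f c x) = projClass b' f (μ c) (b.equiv b' μ x) := by
  refine LinearMap.congr_fun (b.ext (f₁ := (b.equiv b' μ : V →ₗ[𝔽] V) ∘ₗ projClass b f c)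
    (f₂ := projClass b' f (μ c) ∘ₗ (b.equiv b' μ : V →ₗ[𝔽] V)) fun j => ?_) x
  simp only [LinearMap.comp_apply, LinearEquiv.coe_coe, projClass, Module.Basis.constr_basis,
    b.equiv_apply, connected_equiv_iff hf]
  split_ifs <;> simp [b.equiv_apply]

lemma ApproxStep.equiv (hf : CommutesWith f (b.equiv b' μ)) {c d : I}
    (h : ApproxStep b f c d) :
    ApproxStep b' f (μ c) (μ d) := by
  have mem {e x} (hx : x ∈ classSpan b f e) : b.equiv b' μ x ∈ classSpan b' f (μ e) :=
    classSpan_equiv hf e ▸ Submodule.mem_map_of_mem hx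
  have proj {e} {v : Fin (m + 1) → V} (hv : projClass b f e (f v) ≠ 0) :
      projClass b' f (μ e) (f fun k => b.equiv b' μ (v k)) ≠ 0 := by
    rwa [hf, ← projClass_equiv hf, LinearEquiv.map_ne_zero_iff]
  obtain ⟨k₁, k₂, hk, ⟨v, h₁, h₂, hv⟩ | ⟨v, h₁, h₂, hv⟩⟩ := h
  · exact ⟨k₁, k₂, hk, Or.inl ⟨_, mem h₁, mem h₂, proj hv⟩⟩
  · exact ⟨k₁, k₂, hk, Or.inr ⟨_, mem h₁, mem h₂, proj hv⟩⟩

lemma Approx.equiv (hf : CommutesWith f (b.equiv b' μ)) {i j : I} (h : Approx b f i j) :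
    Approx b' f (μ i) (μ j) :=
  Relation.ReflTransGen.lift μ (fun _ _ => Or.imp (·.equiv hf) (·.equiv hf)) _ _ h

lemma approx_equiv_iff (hf : CommutesWith f (b.equiv b' μ)) (i j : I) :
    Approx b' f (μ i) (μ j) ↔ Approx b f i j :=
  ⟨fun h => by simpa using h.equiv hf.basis_equiv_symm, (·.equiv hf)⟩

lemma hatSpan_equiv (hf : CommutesWith f (b.equiv b' μ)) (i : I) :
    (hatSpan b f i).map (b.equiv b' μ : V →ₗ[𝔽] V) = hatSpan b' f (μ i) :=
  b.map_equiv_span_setOf (approx_equiv_iff hf) i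

end Transport

/-- Corollary. -/
theorem stmt14 (hm : 1 ≤ m) (b b' : Module.Basis I 𝔽 V)
    (f : MultilinearMap 𝔽 (fun _ : Fin (m + 1) => V) V) (μ : I ≃ I)
    (hg : ∀ (i j : I) (k₁ k₂ : Fin (m + 1)), k₁ < k₂ → ∀ v : Fin (m + 1) → V,
      f (Function.update (Function.update (fun t => (b.equiv b' μ) (v t)) k₁ (b' (μ i))) k₂ (b' (μ j))) =
        (b.equiv b' μ) (f (Function.update (Function.update v k₁ (b i)) k₂ (b j)))) :
    IsoDecomp f {W | ∃ i, W = hatSpan b f i} {W | ∃ i, W = hatSpan b' f i} := by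
  have hf : CommutesWith f (b.equiv b' μ) :=
    CommutesWith.of_update_update_basis b ⟨0, by omega⟩ ⟨1, by omega⟩ fun i j v => by
      simpa only [b.equiv_apply] using hg i j _ _ (Fin.mk_lt_mk.2 zero_lt_one) v
  refine ⟨b.equiv b' μ, hf, Set.ext fun W => ⟨?_, ?_⟩⟩
  · rintro ⟨_, ⟨i, rfl⟩, rfl⟩
    exact ⟨μ i, hatSpan_equiv hf i⟩
  · rintro ⟨i, rfl⟩
    exact ⟨_, ⟨μ.symm i, rfl⟩, by rw [hatSpan_equiv hf, μ.apply_symm_apply]⟩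
end
end
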